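/- Suppose there exists an (n,w,q) MDS-CW code with q ≥ 3 and 1 ≤ w ≤ n. Then every set A of words of length n and weight w over Fin q in which any two members have Hamming distance at most w−1 satisfies |A| ≤ (q−1)^{w−1}. -/

import Mathlib

/-- The weight of a word `x : Fin n → Fin q`: the number of nonzero coordinates. -/
def wt {n q : ℕ} (x : Fin n → Fin q) : ℕ :=
  (Finset.univ.filter fun i => (x i : ℕ) ≠ 0).card

/-- The support of a word `x : Fin n → Fin q`: the set of nonzero coordinates. -/
def supp {n q : ℕ} (x : Fin n → Fin q) : Finset (Fin n) :=
  Finset.univ.filter fun i => (x i : ℕ) ≠ 0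

/-- `C` is an (n,w,q) MDS-CW code: a constant-weight code of length `n` and
weight `w` over `Fin q` with minimum Hamming distance `w` such that every
`w`-element subset of `Fin n` is the support of exactly `q - 1` codewords. -/
def IsMDSCW (n w q : ℕ) (C : Finset (Fin n → Fin q)) : Prop :=
  (∀ c ∈ C, wt c = w) ∧
  (∀ c₁ ∈ C, ∀ c₂ ∈ C, c₁ ≠ c₂ → w ≤ hammingDist c₁ c₂) ∧
  (∀ S : Finset (Fin n), S.card = w → (C.filter fun c => supp c = S).card = q - 1)


/-!
This is the code–anticode bound. The Hamming isometries fixing `0` act transitively on the set `X`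
of words of weight `w`: a coordinate permutation followed by coordinatewise relabellings fixing
`0` moves any word of weight `w` to any other. Two distinct codewords are at distance at least
`w` and two members of `A` at distance at most `w - 1`, so each image `g • C` meets `A` at most
once. Counting the triples `(g, c, a)` with `g • c = a` therefore gives `|C| |A| ≤ |X|`, and
`|C| = C(n, w) (q - 1)`, `|X| = C(n, w) (q - 1) ^ w`.
-/

open Finset

def transporter (G : Type*) {α : Type*} [SMul G α] [Fintype G] [DecidableEq α] (x y : α) :
    Finset G :=
  {g | g • x = y}

section Transporter

variable {G α : Type*} [Group G] [Fintype G] [MulAction G α]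

theorem card_transporter_of_smul_eq [DecidableEq α] {x y : α} {g₀ : G} (h : g₀ • x = y) :
    #(transporter G x y) = #(transporter G x x) := by
  refine card_nbij' (g₀⁻¹ * ·) (g₀ * ·) ?_ ?_ ?_ ?_ <;> intro g <;>
    simp_all [transporter, mul_smul, inv_smul_eq_iff]

theorem card_mul_card_transporter_self [DecidableEq α] {X : Finset α}
    (hX : ∀ g : G, ∀ x ∈ X, g • x ∈ X) (htrans : ∀ x ∈ X, ∀ y ∈ X, ∃ g : G, g • x = y)
    {x : α} (hx : x ∈ X) : #X * #(transporter G x x) = Fintype.card G := by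
  calc #X * #(transporter G x x) = ∑ _y ∈ X, #(transporter G x x) := by
        rw [sum_const, smul_eq_mul]
    _ = ∑ y ∈ X, #(transporter G x y) := sum_congr rfl fun y hy => by
        obtain ⟨g₀, hg₀⟩ := htrans x hx y hy
        exact (card_transporter_of_smul_eq hg₀).symm
    _ = Fintype.card G := (card_eq_sum_card_fiberwise fun g _ => hX g x hx).symm

theorem card_mul_card_le_of_transitive {X C A : Finset α} (hX : ∀ g : G, ∀ x ∈ X, g • x ∈ X)
    (htrans : ∀ x ∈ X, ∀ y ∈ X, ∃ g : G, g • x = y) (hCX : C ⊆ X) (hAX : A ⊆ X)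
    (hCA : ∀ g : G, ∀ c ∈ C, ∀ c' ∈ C, g • c ∈ A → g • c' ∈ A → c = c') :
    #C * #A ≤ #X := by
  classical
  obtain rfl | ⟨c₀, hc₀⟩ := C.eq_empty_or_nonempty
  · simp
  set s := #(transporter G c₀ c₀)
  have hs : 0 < s := card_pos.2 ⟨1, by simp [transporter]⟩
  have hG : #X * s = Fintype.card G := card_mul_card_transporter_self hX htrans (hCX hc₀)
  have hpair : ∀ p ∈ C ×ˢ A,
      s ≤ #(univ.bipartiteAbove (fun (p : α × α) (g : G) => g • p.1 = p.2) p) := by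
    rintro ⟨c, a⟩ hp
    obtain ⟨hc, ha⟩ := mem_product.1 hp
    obtain ⟨g₀, hg₀⟩ := htrans c (hCX hc) a (hAX ha)
    have hGc := card_mul_card_transporter_self hX htrans (hCX hc)
    have hcard : #(transporter G c c) = s :=
      Nat.eq_of_mul_eq_mul_left (card_pos.2 ⟨c₀, hCX hc₀⟩) (hGc.trans hG.symm)
    exact (hcard ▸ card_transporter_of_smul_eq hg₀).ge
  have hgroup : ∀ g ∈ (univ : Finset G),
      #((C ×ˢ A).bipartiteBelow (fun (p : α × α) (g : G) => g • p.1 = p.2) g) ≤ 1 := by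
    intro g _
    refine card_le_one.2 fun p hp p' hp' => ?_
    simp only [bipartiteBelow, mem_filter, mem_product] at hp hp'
    have hfst := hCA g p.1 hp.1.1 p'.1 hp'.1.1 (hp.2 ▸ hp.1.2) (hp'.2 ▸ hp'.1.2)
    exact Prod.ext hfst (hp.2.symm.trans (hfst ▸ hp'.2))
  have hcount := card_nsmul_le_card_nsmul _ hpair hgroup
  rw [card_product, card_univ, ← hG, smul_eq_mul, smul_eq_mul, mul_one] at hcount
  exact Nat.le_of_mul_le_mul_right hcount hs

end Transporter

section Hamming

variable {ι β : Type*} [Fintype ι] [DecidableEq β]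

theorem hammingDist_comp_equiv {κ : Type*} [Fintype κ] (e : κ ≃ ι) (x y : ι → β) :
    hammingDist (x ∘ e) (y ∘ e) = hammingDist x y :=
  card_equiv e (by simp)

variable (ι β) [Zero β]

def zeroFixingIsometries : Subgroup (Equiv.Perm (ι → β)) where
  carrier := {σ | σ 0 = 0 ∧ ∀ x y, hammingDist (σ x) (σ y) = hammingDist x y}
  mul_mem' {σ τ} hσ hτ := ⟨by simp [hσ.1, hτ.1], fun x y => by simp [hσ.2, hτ.2]⟩
  one_mem' := ⟨rfl, fun _ _ => rfl⟩
  inv_mem' {σ} hσ := ⟨by rw [Equiv.Perm.inv_eq_iff_eq, hσ.1],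
    fun x y => by simpa using (hσ.2 (σ⁻¹ x) (σ⁻¹ y)).symm⟩

variable {ι β}

theorem hammingNorm_apply_of_mem_zeroFixingIsometries {σ : Equiv.Perm (ι → β)}
    (hσ : σ ∈ zeroFixingIsometries ι β) (x : ι → β) : hammingNorm (σ x) = hammingNorm x := by
  rw [← hammingDist_zero_right, ← hσ.1, hσ.2, hammingDist_zero_right]

theorem exists_mem_zeroFixingIsometries_apply_eq {x y : ι → β}
    (h : hammingNorm x = hammingNorm y) : ∃ σ ∈ zeroFixingIsometries ι β, σ x = y := by
  obtain ⟨π, hπ⟩ := Equiv.Perm.exists_map_finset_eq {i | x i ≠ 0} {i | y i ≠ 0} h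
  have hzero : ∀ i, x (π.symm i) = 0 ↔ y i = 0 := fun i =>
    not_iff_not.1 (by simpa using Finset.ext_iff.1 hπ i)
  let τ : ι → Equiv.Perm β := fun i => Equiv.swap (x (π.symm i)) (y i)
  refine ⟨(π.arrowCongr (Equiv.refl β)).trans (Equiv.piCongrRight τ), ⟨funext fun i => ?_,
    fun u v => ?_⟩, funext fun i => ?_⟩
  · by_cases hy : y i = 0
    · simp [τ, hy, (hzero i).2 hy]
    · exact Equiv.swap_apply_of_ne_of_ne (mt (hzero i).1 hy ∘ Eq.symm) (Ne.symm hy)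
  · exact (hammingDist_comp (fun i => τ i) fun i => (τ i).injective).trans
      (hammingDist_comp_equiv π.symm u v)
  · simp [τ]

end Hamming

section Count

variable {ι β : Type*} [Fintype ι] [DecidableEq ι] [Fintype β] [DecidableEq β] [Zero β]

theorem card_filter_support_eq (S : Finset ι) :
    #{x : ι → β | ({i | x i ≠ 0} : Finset ι) = S} = (Fintype.card β - 1) ^ #S := by
  have hpi : ({x : ι → β | ({i | x i ≠ 0} : Finset ι) = S} : Finset (ι → β)) =
      Fintype.piFinset fun i => if i ∈ S then univ.erase 0 else {0} := by
    ext x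
    simp only [mem_filter, mem_univ, true_and, Fintype.mem_piFinset, Finset.ext_iff]
    refine forall_congr' fun i => ?_
    split_ifs with hi <;> simp [hi]
  rw [hpi, Fintype.card_piFinset]
  simp_rw [apply_ite card, card_erase_of_mem (mem_univ _), card_univ, card_singleton]
  rw [prod_ite_mem, univ_inter, prod_const]

theorem card_filter_hammingNorm_eq (w : ℕ) :
    #{x : ι → β | hammingNorm x = w} = (Fintype.card ι).choose w * (Fintype.card β - 1) ^ w := by
  have hmaps : ∀ x ∈ ({x : ι → β | hammingNorm x = w} : Finset _),
      ({i | x i ≠ 0} : Finset ι) ∈ powersetCard w univ := fun x hx =>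
    mem_powersetCard.2 ⟨subset_univ _, (mem_filter.1 hx).2⟩
  rw [card_eq_sum_card_fiberwise hmaps, ← card_univ, ← card_powersetCard, ← smul_eq_mul,
    ← sum_const]
  refine sum_congr rfl fun S hS => ?_
  rw [filter_filter, ← (mem_powersetCard.1 hS).2, ← card_filter_support_eq S]
  congr 1
  exact filter_congr fun x _ => ⟨And.right, fun h => ⟨h ▸ rfl, h⟩⟩

end Count

theorem card_mul_card_le_of_hammingDist {ι β : Type*} [Fintype ι] [DecidableEq ι] [Fintype β]
    [DecidableEq β] [Zero β] {C A : Finset (ι → β)} {w d : ℕ}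
    (hCw : ∀ c ∈ C, hammingNorm c = w) (hAw : ∀ a ∈ A, hammingNorm a = w)
    (hCd : ∀ c ∈ C, ∀ c' ∈ C, c ≠ c' → d ≤ hammingDist c c')
    (hAd : ∀ a ∈ A, ∀ a' ∈ A, hammingDist a a' < d) :
    #C * #A ≤ (Fintype.card ι).choose w * (Fintype.card β - 1) ^ w := by
  classical
  rw [← card_filter_hammingNorm_eq]
  refine card_mul_card_le_of_transitive (G := zeroFixingIsometries ι β) (fun g x hx => ?_)
    (fun x hx y hy => ?_) (fun c hc => by simpa using hCw c hc)
    (fun a ha => by simpa using hAw a ha) (fun g c hc c' hc' ha ha' => ?_)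
  · simpa [Subgroup.smul_def, hammingNorm_apply_of_mem_zeroFixingIsometries g.2] using hx
  · obtain ⟨σ, hσ, rfl⟩ := exists_mem_zeroFixingIsometries_apply_eq
      ((mem_filter.1 hx).2.trans (mem_filter.1 hy).2.symm)
    exact ⟨⟨σ, hσ⟩, rfl⟩
  · by_contra hne
    have := g.2.2 c c' ▸ hAd _ ha _ ha'
    exact (hCd c hc c' hc' hne).not_gt this

theorem wt_eq_hammingNorm {n q : ℕ} [NeZero q] (x : Fin n → Fin q) : wt x = hammingNorm x := by
  simp [wt, hammingNorm]

theorem IsMDSCW.card_eq {n w q : ℕ} {C : Finset (Fin n → Fin q)} (hC : IsMDSCW n w q C) :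
    #C = n.choose w * (q - 1) := by
  have hmaps : ∀ c ∈ C, supp c ∈ powersetCard w univ := fun c hc =>
    mem_powersetCard.2 ⟨subset_univ _, hC.1 c hc⟩
  rw [card_eq_sum_card_fiberwise hmaps,
    sum_congr rfl fun S hS => hC.2.2 S (mem_powersetCard.1 hS).2, sum_const,
    card_powersetCard, card_univ, Fintype.card_fin, smul_eq_mul]

/-- If an (n,w,q) MDS-CW code exists, then every anticode of words of length
`n` and weight `w` over `Fin q` with Hamming diameter at most `w - 1` has size
at most `(q-1)^(w-1)`. -/
theorem mdscw_max_anticode (n w q : ℕ) (hq : 3 ≤ q) (hw1 : 1 ≤ w) (hw : w ≤ n)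
    (h : ∃ C : Finset (Fin n → Fin q), IsMDSCW n w q C)
    (A : Finset (Fin n → Fin q)) (hA : ∀ a ∈ A, wt a = w)
    (hAdiam : ∀ a₁ ∈ A, ∀ a₂ ∈ A, hammingDist a₁ a₂ ≤ w - 1) :
    A.card ≤ (q - 1) ^ (w - 1) := by
  have : NeZero q := ⟨by omega⟩
  obtain ⟨C, hC⟩ := h
  have hbound := card_mul_card_le_of_hammingDist (d := w)
    (fun c hc => (wt_eq_hammingNorm c).symm.trans (hC.1 c hc))
    (fun a ha => (wt_eq_hammingNorm a).symm.trans (hA a ha)) hC.2.1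
    (fun a ha a' ha' => by have := hAdiam a ha a' ha'; omega)
  have hpow : (q - 1) ^ w = (q - 1) * (q - 1) ^ (w - 1) := by
    rw [← pow_succ', Nat.sub_add_cancel hw1]
  rw [hC.card_eq, Fintype.card_fin, Fintype.card_fin, hpow, ← mul_assoc] at hbound
  exact Nat.le_of_mul_le_mul_left hbound (Nat.mul_pos (Nat.choose_pos hw) (by omega))
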